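/- arXiv:2506.02512 — 2 statements merged into one kernel-verified Lean document; each statement's English description precedes it below -/
import Mathlib

section
/- Let a, b, c be nonnegative integers and define I(a,b,c) = ∫₀¹ t^c (t-1)^b (t+1)^a dt + ∫₀^{-1} t^c (t-1)^b (t+1)^a dt. Then I(a,b,c) = 0 if and only if a = b and a + b + c is even. -/
/-!
Substituting `t ↦ -t` in the second integral turns the sum into
`∫₀¹ (f t - f (-t)) dt = (-1)^b ∫₀¹ t^c (u^b v^a - (-1)^c u^a v^b) dt`
with `u = 1 - t < v = 1 + t`.
For odd `c` the bracket is a sum of positive terms; for even `c` it has the sign of `a - b`,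
as `u^b v^a = (u v)^b v^(a-b)` when `b ≤ a`. So the integrand vanishes identically when `a = b`
and `c` is even, and otherwise has a strict constant sign on `(0, 1)`.
-/

open MeasureTheory intervalIntegral Set

theorem integral_add_integral_neg_eq_integral_sub {f : ℝ → ℝ} {r : ℝ}
    (hpos : IntervalIntegrable f volume 0 r) (hneg : IntervalIntegrable f volume 0 (-r)) :
    (∫ t in (0:ℝ)..r, f t) + (∫ t in (0:ℝ)..(-r), f t) =
      ∫ t in (0:ℝ)..r, (f t - f (-t)) := by
  have hcomp : IntervalIntegrable (fun t => f (-t)) volume 0 r := by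
    simpa using (IntervalIntegrable.iff_comp_neg (a := 0) (b := -r)).mp hneg
  rw [integral_sub hpos hcomp, integral_comp_neg, neg_zero, integral_symm (-r), ← sub_eq_add_neg]

theorem pow_mul_pow_lt_pow_mul_pow {K : Type*} [Field K] [LinearOrder K] [IsStrictOrderedRing K]
    {u v : K} (hu : 0 < u) (huv : u < v) {m n : ℕ} (hmn : m < n) :
    u ^ n * v ^ m < u ^ m * v ^ n := by
  obtain ⟨k, rfl⟩ := Nat.exists_eq_add_of_lt hmn
  calc u ^ (m + k + 1) * v ^ m = (u * v) ^ m * u ^ (k + 1) := by ring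
    _ < (u * v) ^ m * v ^ (k + 1) :=
      mul_lt_mul_of_pos_left (pow_lt_pow_left₀ huv hu.le k.succ_ne_zero)
        (pow_pos (mul_pos hu (hu.trans huv)) m)
    _ = u ^ m * v ^ (m + k + 1) := by ring

theorem sub_comp_neg_eq {R : Type*} [CommRing R] (a b c : ℕ) (t : R) :
    t ^ c * (t - 1) ^ b * (t + 1) ^ a - (-t) ^ c * (-t - 1) ^ b * (-t + 1) ^ a =
      (-1) ^ b *
        (t ^ c * ((1 - t) ^ b * (1 + t) ^ a - (-1) ^ c * ((1 - t) ^ a * (1 + t) ^ b))) := by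
  rw [show t - 1 = -(1 - t) by ring, show -t - 1 = -(1 + t) by ring,
    show -t + 1 = 1 - t by ring, neg_pow (1 - t), neg_pow (1 + t), neg_pow t]
  ring

theorem integral_ne_zero_of_forall_pos_or_forall_neg {g : ℝ → ℝ} {a b : ℝ} (hab : a < b)
    (hg : IntervalIntegrable g volume a b)
    (hsign : (∀ t ∈ Ioo a b, 0 < g t) ∨ ∀ t ∈ Ioo a b, g t < 0) :
    ∫ t in a..b, g t ≠ 0 := by
  rcases hsign with hpos | hneg
  · exact (intervalIntegral_pos_of_pos_on hg hpos hab).ne'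
  · have := intervalIntegral_pos_of_pos_on hg.neg (fun t ht => neg_pos.2 (hneg t ht)) hab
    simp only [Pi.neg_apply, intervalIntegral.integral_neg, neg_pos] at this
    exact this.ne

theorem forall_pos_or_forall_neg_pow_mul_pow_sub {K : Type*} [Field K] [LinearOrder K]
    [IsStrictOrderedRing K] {a b c : ℕ} (h : ¬(a = b ∧ Even c)) :
    (∀ u v : K, 0 < u → u < v → 0 < u ^ b * v ^ a - (-1) ^ c * (u ^ a * v ^ b)) ∨
      ∀ u v : K, 0 < u → u < v → u ^ b * v ^ a - (-1) ^ c * (u ^ a * v ^ b) < 0 := by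
  rcases Nat.even_or_odd c with hc | hc
  · simp only [hc.neg_one_pow, one_mul, sub_pos, sub_neg]
    rcases lt_trichotomy a b with hab | rfl | hab
    · exact Or.inr fun u v hu huv => pow_mul_pow_lt_pow_mul_pow hu huv hab
    · exact absurd ⟨rfl, hc⟩ h
    · exact Or.inl fun u v hu huv => pow_mul_pow_lt_pow_mul_pow hu huv hab
  · simp only [hc.neg_one_pow, neg_one_mul, sub_neg_eq_add]
    refine Or.inl fun u v hu huv => ?_
    have hv := hu.trans huv
    positivity

theorem integral_eq_zero_iff (a b c : ℕ) :
    (∫ t in (0:ℝ)..1, t ^ c * (t - 1) ^ b * (t + 1) ^ a) +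
      (∫ t in (0:ℝ)..(-1), t ^ c * (t - 1) ^ b * (t + 1) ^ a) = 0 ↔
    a = b ∧ Even (a + b + c) := by
  have hf : Continuous fun t : ℝ => t ^ c * (t - 1) ^ b * (t + 1) ^ a := by fun_prop
  rw [integral_add_integral_neg_eq_integral_sub (hf.intervalIntegrable 0 1)
    (hf.intervalIntegrable 0 (-1))]
  simp only [sub_comp_neg_eq]
  rw [intervalIntegral.integral_const_mul, mul_eq_zero,
    or_iff_right (pow_ne_zero b (neg_ne_zero.2 one_ne_zero))]
  have hparity : a = b ∧ Even (a + b + c) ↔ a = b ∧ Even c :=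
    and_congr_right fun hab => by rw [hab, Nat.even_add, iff_true_left (Even.add_self b)]
  rw [hparity]
  constructor
  · intro h
    by_contra hne
    have hu : ∀ t ∈ Ioo (0:ℝ) 1, 0 < 1 - t := fun t ht => sub_pos.2 ht.2
    have huv : ∀ t ∈ Ioo (0:ℝ) 1, 1 - t < 1 + t := fun t ht => by linarith [ht.1]
    refine integral_ne_zero_of_forall_pos_or_forall_neg one_pos
      (Continuous.intervalIntegrable (by fun_prop) 0 1) ?_ h
    exact (forall_pos_or_forall_neg_pow_mul_pow_sub hne).imp
      (fun H t ht => mul_pos (pow_pos ht.1 c) (H _ _ (hu t ht) (huv t ht)))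
      (fun H t ht => mul_neg_of_pos_of_neg (pow_pos ht.1 c) (H _ _ (hu t ht) (huv t ht)))
  · rintro ⟨rfl, hc⟩
    simp [hc.neg_one_pow]
end

section
/- Let (𝒜, m) be a rank-2 multiarrangement of n ≥ 2 distinct lines through the origin in K² with multiplicities m₁,…,m_n ≥ 1, and suppose m_max := max mᵢ ≥ |m|/2 where |m| = Σmᵢ. Then the module D(𝒜,m) of logarithmic derivations is free with exponents (|m| − m_max, m_max); in particular a homogeneous basis exists with degrees |m| − m_max and m_max. -/
/-!
Let `u = α i₀` be a line of maximal multiplicity `e` and complete it to linear coordinates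
`(u, v)`; a derivation is determined by its values on `u` and `v`. Take `θ₁` with `θ₁ u = 0`,
`θ₁ v = W := ∏_{i ≠ i₀} α_i ^ m_i`, and `θ₂` with `θ₂ u = u ^ e`, `θ₂ v = h`, where `h` is a form
of degree `e` making `θ₂` tangent to every other line. Such an `h` exists because
`e ≥ |m| - e = deg W`: after dehomogenizing, the tangency conditions are congruences modulo
pairwise coprime powers of linear polynomials in `K[t]`, whose Chinese-remainder solution of
degree `≤ e` is homogenized back to degree `e`.

If `θ` is tangent, then `θ u = g u ^ e`, and `θ - g θ₂` kills `u` and is still tangent to the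
other lines, so its value on `v` is divisible by each `α_i ^ m_i`, hence by `W` (distinct lines are
non-associated primes). This gives `θ = f θ₁ + g θ₂`, and the pair `(f, g)` is unique because
`θ₁, θ₂` are triangular in the coordinates `(u, v)`.
-/

namespace Polynomial

section CommSemiring

variable {R : Type*} [CommSemiring R]

theorem homogenize_one_eq (p : R[X]) :
    p.homogenize 1 = .C (p.coeff 1) * .X 0 + .C (p.coeff 0) * .X 1 := by
  simp [homogenize, Finset.Nat.antidiagonal_succ, MvPolynomial.C_mul_X_eq_monomial,
    ← Finsupp.erase_eq_update_zero, add_comm]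

theorem homogenize_pow {p : R[X]} {n : ℕ} (hp : p.natDegree ≤ n) (k : ℕ) :
    (p ^ k).homogenize (k * n) = p.homogenize n ^ k := by
  induction k with
  | zero => simp
  | succ k ih =>
    rw [pow_succ, pow_succ, Nat.succ_mul, homogenize_mul _ _ _ hp, ih]
    exact natDegree_pow_le.trans (Nat.mul_le_mul_left k hp)

theorem homogenize_dvd_homogenize [NoZeroDivisors R] {p q : R[X]} {n : ℕ}
    (hq : q.natDegree ≤ n) (h : p ∣ q) : p.homogenize p.natDegree ∣ q.homogenize n := by
  obtain ⟨r, rfl⟩ := h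
  rcases eq_or_ne (p * r) 0 with h0 | h0
  · simp [h0]
  have hdeg := natDegree_mul (left_ne_zero_of_mul h0) (right_ne_zero_of_mul h0)
  obtain ⟨k, rfl⟩ : ∃ k, n = p.natDegree + (r.natDegree + k) :=
    ⟨n - (p.natDegree + r.natDegree), by omega⟩
  rw [homogenize_mul p r le_rfl (Nat.le_add_right _ _)]
  exact dvd_mul_right _ _

end CommSemiring

variable {K : Type*} [Field K]

theorem isCoprime_C_mul_X_add_C {a b c d : K} (h : a * d ≠ b * c) :
    IsCoprime (C a * X + C b) (C c * X + C d) := by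
  have hδ : C (a * d - b * c)⁻¹ * (C a * C d - C b * C c) = 1 := by
    rw [← C_mul, ← C_mul, ← C_sub, ← C_mul, inv_mul_cancel₀ (sub_ne_zero.mpr h), C_1]
  exact ⟨-C ((a * d - b * c)⁻¹ * c), C ((a * d - b * c)⁻¹ * a), by
    simp only [C_mul]; linear_combination hδ⟩

theorem exists_natDegree_le_forall_dvd_sub {ι : Type*} {T : Finset ι} {p : ι → K[X]}
    (hp : (T : Set ι).Pairwise fun i j ↦ IsCoprime (p i) (p j)) (hp0 : ∀ i ∈ T, p i ≠ 0)
    (x : ι → K[X]) :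
    ∃ y : K[X], y.natDegree ≤ ∑ i ∈ T, (p i).natDegree ∧ ∀ i ∈ T, p i ∣ y - x i := by
  obtain ⟨y, hy⟩ := Ideal.exists_forall_sub_mem_ideal (I := fun i : T ↦ Ideal.span {p i})
    (fun i j hij ↦ (Ideal.isCoprime_span_singleton_iff _ _).mpr
      (hp i.2 j.2 (Subtype.coe_ne_coe.mpr hij))) (fun i ↦ x i)
  have hN : ∏ i ∈ T, p i ≠ 0 := Finset.prod_ne_zero_iff.mpr hp0
  refine ⟨y % ∏ i ∈ T, p i, ?_, fun i hi ↦ ?_⟩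
  · rw [← natDegree_prod _ _ hp0]
    exact natDegree_le_natDegree (degree_mod_lt y hN).le
  · rw [EuclideanDomain.mod_eq_sub_mul_div, sub_right_comm]
    exact dvd_sub (Ideal.mem_span_singleton.mp (hy ⟨i, hi⟩))
      ((Finset.dvd_prod_of_mem p hi).mul_right _)

end Polynomial

namespace MvPolynomial

variable {K σ ι : Type*} [Field K]

theorem irreducible_of_isHomogeneous_one {f : MvPolynomial σ K} (hf : f.IsHomogeneous 1)
    (hf0 : f ≠ 0) : Irreducible f :=
  irreducible_of_totalDegree_eq_one (hf.totalDegree hf0) fun x hx ↦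
    isUnit_iff_ne_zero.mpr fun hx0 ↦ hf0 <| by ext i; simpa [hx0] using hx i

theorem exists_eq_smul_of_dvd_of_isHomogeneous_one {f g : MvPolynomial σ K}
    (hf : f.IsHomogeneous 1) (hg : g.IsHomogeneous 1) (hg0 : g ≠ 0) (hfg : f ∣ g) :
    ∃ c : K, g = c • f := by
  obtain ⟨w, rfl⟩ := hfg
  have hf0 := left_ne_zero_of_mul hg0
  have hw : w.totalDegree = 0 := by
    have := totalDegree_mul_of_isDomain hf0 (right_ne_zero_of_mul hg0)
    rw [hg.totalDegree hg0, hf.totalDegree hf0] at this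
    omega
  refine ⟨coeff 0 w, ?_⟩
  conv_lhs => rw [totalDegree_eq_zero_iff_eq_C.mp hw]
  rw [smul_eq_C_mul, mul_comm]

theorem isRelPrime_of_isHomogeneous_one {f g : MvPolynomial σ K} (hf : f.IsHomogeneous 1)
    (hg : g.IsHomogeneous 1) (hf0 : f ≠ 0) (hg0 : g ≠ 0) (hfg : ∀ c : K, g ≠ c • f) :
    IsRelPrime f g :=
  (irreducible_of_isHomogeneous_one hf hf0).isRelPrime_iff_not_dvd.mpr fun h ↦
    let ⟨c, hc⟩ := exists_eq_smul_of_dvd_of_isHomogeneous_one hf hg hg0 h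
    hfg c hc

theorem prod_pow_dvd_of_isHomogeneous_one {T : Finset ι} {α : ι → MvPolynomial σ K}
    (hlin : ∀ i ∈ T, (α i).IsHomogeneous 1) (hα : ∀ i ∈ T, α i ≠ 0)
    (hdist : (T : Set ι).Pairwise fun i j ↦ ∀ c : K, α i ≠ c • α j) (m : ι → ℕ)
    {z : MvPolynomial σ K} (h : ∀ i ∈ T, α i ^ m i ∣ z) : ∏ i ∈ T, α i ^ m i ∣ z :=
  Finset.prod_dvd_of_isRelPrime (fun i hi j hj hij ↦ (isRelPrime_of_isHomogeneous_one
    (hlin i hi) (hlin j hj) (hα i hi) (hα j hj) (hdist hj hi hij.symm)).pow) h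

theorem exists_eq_C_mul_X_add_C_mul_X {f : MvPolynomial (Fin 2) K} (hf : f.IsHomogeneous 1) :
    ∃ a b : K, f = C a * X 0 + C b * X 1 := by
  rw [← Polynomial.homogenize_eq_of_isHomogeneous hf rfl, Polynomial.homogenize_one_eq]
  exact ⟨_, _, rfl⟩

theorem derivation_C_mul_add_C_mul (θ : Derivation K (MvPolynomial σ K) (MvPolynomial σ K))
    (a b : K) (x y : MvPolynomial σ K) : θ (C a * x + C b * y) = C a * θ x + C b * θ y := by
  simp [Derivation.leibniz]

theorem C_mul_add_C_mul_eq_smul {a b a' b' : K} (ha' : a' ≠ 0) (h : a * b' = b * a')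
    (x y : MvPolynomial σ K) : C a * x + C b * y = (a / a') • (C a' * x + C b' * y) := by
  have h₁ : a / a' * a' = a := div_mul_cancel₀ a ha'
  have h₂ : a / a' * b' = b := by field_simp; linear_combination h
  rw [smul_eq_C_mul, mul_add, ← mul_assoc, ← mul_assoc, ← C_mul, ← C_mul, h₁, h₂]

theorem exists_isHomogeneous_forall_pow_dvd {u v : MvPolynomial (Fin 2) K}
    (hu : u.IsHomogeneous 1) (hv : v.IsHomogeneous 1) {T : Finset ι} {p q : ι → K}
    (hq : ∀ i ∈ T, q i ≠ 0) (hpq : (T : Set ι).Pairwise fun i j ↦ q i * p j ≠ p i * q j)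
    (k : ι → ℕ) {e : ℕ} (he : ∑ i ∈ T, k i ≤ e) :
    ∃ h : MvPolynomial (Fin 2) K, h.IsHomogeneous e ∧
      ∀ i ∈ T, (C (q i) * v + C (p i) * u) ^ k i ∣ C (q i) * h + C (p i) * u ^ e := by
  set ℓ : ι → Polynomial K := fun i ↦ .C (q i) * .X + .C (p i)
  have hℓ : ∀ i ∈ T, (ℓ i ^ k i).natDegree = k i := fun i hi ↦ by
    rw [Polynomial.natDegree_pow, Polynomial.natDegree_linear (hq i hi), mul_one]
  obtain ⟨H, hH, hHdvd⟩ := Polynomial.exists_natDegree_le_forall_dvd_sub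
    (fun i hi j hj hij ↦ (Polynomial.isCoprime_C_mul_X_add_C (hpq hi hj hij)).pow)
    (fun i hi ↦ pow_ne_zero _ (Polynomial.ne_zero_of_natDegree_gt (n := 0)
      (by rw [Polynomial.natDegree_linear (hq i hi)]; exact one_pos)))
    (fun i ↦ .C (-(p i / q i)))
  rw [Finset.sum_congr rfl hℓ] at hH
  -- `homogenize` puts the variable on `X 0`, so `X 0 ↦ v, X 1 ↦ u` sends `ℓ i` to `q i v + p i u`.
  have huv : ∀ j, (![v, u] j).IsHomogeneous 1 := Fin.forall_fin_two.mpr ⟨hv, hu⟩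
  refine ⟨aeval ![v, u] (H.homogenize e), by
    simpa using (Polynomial.isHomogeneous_homogenize H).aeval _ huv, fun i hi ↦ ?_⟩
  have hG : ℓ i ^ k i ∣ .C (q i) * H + .C (p i) := by
    have : Polynomial.C (q i) * H + .C (p i) = .C (q i) * (H - .C (-(p i / q i))) := by
      rw [Polynomial.C_neg, sub_neg_eq_add, mul_add, ← Polynomial.C_mul,
        mul_div_cancel₀ _ (hq i hi)]
    exact this ▸ (hHdvd i hi).mul_left _
  have hGdeg : (Polynomial.C (q i) * H + .C (p i)).natDegree ≤ e := by
    rw [Polynomial.natDegree_add_C]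
    exact (Polynomial.natDegree_C_mul_le _ _).trans (hH.trans he)
  have hhom := map_dvd (aeval ![v, u]) (Polynomial.homogenize_dvd_homogenize hGdeg hG)
  have hℓk :=
    Polynomial.homogenize_pow (Polynomial.natDegree_linear_le (a := q i) (b := p i)) (k i)
  rw [mul_one, Polynomial.homogenize_one_eq] at hℓk
  rw [hℓ i hi, hℓk] at hhom
  simpa [algebraMap_eq] using hhom

end MvPolynomial

structure LinearCoordinates (K : Type*) [Field K] where
  a : K
  b : K
  c : K
  d : K
  det_eq_one : a * d - b * c = 1

namespace LinearCoordinates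

open MvPolynomial

variable {K : Type*} [Field K] (L : LinearCoordinates K)

noncomputable def u : MvPolynomial (Fin 2) K := C L.a * X 0 + C L.b * X 1

noncomputable def v : MvPolynomial (Fin 2) K := C L.c * X 0 + C L.d * X 1

theorem isHomogeneous_u : L.u.IsHomogeneous 1 :=
  ((isHomogeneous_X K 0).C_mul _).add ((isHomogeneous_X K 1).C_mul _)

theorem isHomogeneous_v : L.v.IsHomogeneous 1 :=
  ((isHomogeneous_X K 0).C_mul _).add ((isHomogeneous_X K 1).C_mul _)

theorem C_det_eq_one : (C L.a * C L.d - C L.b * C L.c : MvPolynomial (Fin 2) K) = 1 := by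
  rw [← C_mul, ← C_mul, ← C_sub, L.det_eq_one, C_1]

theorem X_zero_eq : (X 0 : MvPolynomial (Fin 2) K) = C L.d * L.u + C (-L.b) * L.v := by
  rw [u, v, C_neg]; linear_combination (-X 0 : MvPolynomial (Fin 2) K) * L.C_det_eq_one

theorem X_one_eq : (X 1 : MvPolynomial (Fin 2) K) = C (-L.c) * L.u + C L.a * L.v := by
  rw [u, v, C_neg]; linear_combination (-X 1 : MvPolynomial (Fin 2) K) * L.C_det_eq_one

theorem exists_eq_C_mul_v_add_C_mul_u {f : MvPolynomial (Fin 2) K} (hf : f.IsHomogeneous 1) :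
    ∃ p q : K, f = C q * L.v + C p * L.u := by
  obtain ⟨a, b, rfl⟩ := exists_eq_C_mul_X_add_C_mul_X hf
  refine ⟨a * L.d - b * L.c, b * L.a - a * L.b, ?_⟩
  rw [L.X_zero_eq, L.X_one_eq]
  simp only [map_sub, map_mul, map_neg]
  ring

theorem exists_u_eq {f : MvPolynomial (Fin 2) K} (hf : f.IsHomogeneous 1) (hf0 : f ≠ 0) :
    ∃ L : LinearCoordinates K, L.u = f := by
  obtain ⟨a, b, rfl⟩ := exists_eq_C_mul_X_add_C_mul_X hf
  by_cases ha : a = 0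
  · have hb : b ≠ 0 := by rintro rfl; simp [ha] at hf0
    exact ⟨⟨a, b, -b⁻¹, 0, by simp [hb]⟩, rfl⟩
  · exact ⟨⟨a, b, 0, a⁻¹, by simp [ha]⟩, rfl⟩

noncomputable def derivation (r s : MvPolynomial (Fin 2) K) :
    Derivation K (MvPolynomial (Fin 2) K) (MvPolynomial (Fin 2) K) :=
  mkDerivation K ![C L.d * r - C L.b * s, C L.a * s - C L.c * r]

variable {L} {r s : MvPolynomial (Fin 2) K}

@[simp]
theorem derivation_X_zero : L.derivation r s (X 0) = C L.d * r - C L.b * s :=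
  mkDerivation_X _ _ _

@[simp]
theorem derivation_X_one : L.derivation r s (X 1) = C L.a * s - C L.c * r :=
  mkDerivation_X _ _ _

@[simp]
theorem derivation_u : L.derivation r s L.u = r := by
  rw [u, derivation_C_mul_add_C_mul, derivation_X_zero, derivation_X_one]
  linear_combination r * L.C_det_eq_one

@[simp]
theorem derivation_v : L.derivation r s L.v = s := by
  rw [v, derivation_C_mul_add_C_mul, derivation_X_zero, derivation_X_one]
  linear_combination s * L.C_det_eq_one

theorem derivation_ext {θ θ' : Derivation K (MvPolynomial (Fin 2) K) (MvPolynomial (Fin 2) K)}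
    (hu : θ L.u = θ' L.u) (hv : θ L.v = θ' L.v) : θ = θ' :=
  MvPolynomial.derivation_ext fun j ↦ by
    fin_cases j
    · simp only [Fin.zero_eta, L.X_zero_eq, derivation_C_mul_add_C_mul, hu, hv]
    · simp only [Fin.mk_one, L.X_one_eq, derivation_C_mul_add_C_mul, hu, hv]

theorem isHomogeneous_derivation_X {e : ℕ} (hr : r.IsHomogeneous e) (hs : s.IsHomogeneous e)
    (j : Fin 2) : (L.derivation r s (X j)).IsHomogeneous e := by
  fin_cases j
  · simpa using (hr.C_mul _).sub (hs.C_mul _)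
  · simpa using (hs.C_mul _).sub (hr.C_mul _)

theorem existsUnique_eq_smul_add_smul {U W h : MvPolynomial (Fin 2) K} (hU : U ≠ 0)
    (hW : W ≠ 0) {θ : Derivation K (MvPolynomial (Fin 2) K) (MvPolynomial (Fin 2) K)}
    {f g : MvPolynomial (Fin 2) K} (hu : θ L.u = g * U) (hv : θ L.v = f * W + g * h) :
    ∃! fg : MvPolynomial (Fin 2) K × MvPolynomial (Fin 2) K,
      θ = fg.1 • L.derivation 0 W + fg.2 • L.derivation U h := by
  refine ⟨(f, g), L.derivation_ext (by simp [hu]) (by simp [hv]), ?_⟩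
  rintro ⟨f', g'⟩ rfl
  simp only [Derivation.add_apply, Derivation.smul_apply, derivation_u, derivation_v,
    smul_eq_mul, mul_zero, zero_add] at hu hv
  obtain rfl := mul_right_cancel₀ hU hu
  obtain rfl := mul_right_cancel₀ hW (add_right_cancel hv)
  rfl

theorem pow_dvd_map_v_sub {θ : Derivation K (MvPolynomial (Fin 2) K) (MvPolynomial (Fin 2) K)}
    {p q : K} (hq : q ≠ 0) {k e : ℕ} {g h : MvPolynomial (Fin 2) K} (hg : θ L.u = L.u ^ e * g)
    (hθ : (C q * L.v + C p * L.u) ^ k ∣ θ (C q * L.v + C p * L.u))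
    (hh : (C q * L.v + C p * L.u) ^ k ∣ C q * h + C p * L.u ^ e) :
    (C q * L.v + C p * L.u) ^ k ∣ θ L.v - g * h := by
  have key : C q * (θ L.v - g * h) =
      θ (C q * L.v + C p * L.u) - g * (C q * h + C p * L.u ^ e) := by
    rw [derivation_C_mul_add_C_mul, hg]; ring
  exact (hq.isUnit.map C).dvd_mul_left.mp (key ▸ dvd_sub hθ (hh.mul_left g))

section Multiarrangement

variable {ι : Type*} {α : ι → MvPolynomial (Fin 2) K}

theorem exists_forall_eq_C_mul_v_add_C_mul_u (L : LinearCoordinates K)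
    (hlin : ∀ i, (α i).IsHomogeneous 1) {T : Finset ι} (hT : ∀ i ∈ T, ∀ c : K, α i ≠ c • L.u)
    (hdist : (T : Set ι).Pairwise fun i j ↦ ∀ c : K, α i ≠ c • α j) :
    ∃ p q : ι → K, (∀ i, α i = C (q i) * L.v + C (p i) * L.u) ∧ (∀ i ∈ T, q i ≠ 0) ∧
      (T : Set ι).Pairwise fun i j ↦ q i * p j ≠ p i * q j := by
  choose p q hcoord using fun i ↦ L.exists_eq_C_mul_v_add_C_mul_u (hlin i)
  have hq : ∀ i ∈ T, q i ≠ 0 := fun i hi hqi ↦ hT i hi (p i) <| by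
    rw [hcoord i, hqi, smul_eq_C_mul]; simp
  refine ⟨p, q, hcoord, hq, fun i hi j hj hij h ↦ hdist hi hj hij (q i / q j) ?_⟩
  rw [hcoord i, hcoord j]
  exact C_mul_add_C_mul_eq_smul (hq j hj) h _ _

variable [Fintype ι] [DecidableEq ι]

theorem exists_homogeneous_basis (L : LinearCoordinates K) {i₀ : ι} (hu : α i₀ = L.u)
    (hlin : ∀ i, (α i).IsHomogeneous 1) (hα : ∀ i, α i ≠ 0)
    (hdist : ∀ i j, i ≠ j → ∀ c : K, α i ≠ c • α j) (m : ι → ℕ)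
    (hunbal : ∑ i ∈ Finset.univ.erase i₀, m i ≤ m i₀) :
    ∃ θ₁ θ₂ : Derivation K (MvPolynomial (Fin 2) K) (MvPolynomial (Fin 2) K),
      (∀ i, α i ^ m i ∣ θ₁ (α i)) ∧
      (∀ i, α i ^ m i ∣ θ₂ (α i)) ∧
      (∀ j, (θ₁ (X j)).IsHomogeneous (∑ i ∈ Finset.univ.erase i₀, m i)) ∧
      (∀ j, (θ₂ (X j)).IsHomogeneous (m i₀)) ∧
      (∀ θ : Derivation K (MvPolynomial (Fin 2) K) (MvPolynomial (Fin 2) K),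
        (∀ i, α i ^ m i ∣ θ (α i)) →
        ∃! fg : MvPolynomial (Fin 2) K × MvPolynomial (Fin 2) K,
          θ = fg.1 • θ₁ + fg.2 • θ₂) := by
  set T := Finset.univ.erase i₀
  have hsplit : ∀ P : ι → Prop, (∀ i, P i) ↔ P i₀ ∧ ∀ i ∈ T, P i := fun P ↦ by
    simp only [T, ← Finset.forall_mem_insert, Finset.insert_erase (Finset.mem_univ i₀),
      Finset.mem_univ, true_implies]
  obtain ⟨p, q, hcoord, hq, hpq⟩ := L.exists_forall_eq_C_mul_v_add_C_mul_u hlin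
    (fun i hi ↦ hu ▸ hdist i i₀ (Finset.ne_of_mem_erase hi)) fun i _ j _ ↦ hdist i j
  obtain ⟨h, hh, hdvd⟩ :=
    exists_isHomogeneous_forall_pow_dvd L.isHomogeneous_u L.isHomogeneous_v hq hpq m hunbal
  set W := ∏ i ∈ T, α i ^ m i
  have hW : W.IsHomogeneous (∑ i ∈ T, m i) := by
    simpa using IsHomogeneous.prod T _ _ fun i _ ↦ (hlin i).pow (m i)
  have hmap : ∀ (θ : Derivation K (MvPolynomial (Fin 2) K) (MvPolynomial (Fin 2) K)) i,
      θ (α i) = C (q i) * θ L.v + C (p i) * θ L.u := fun θ i ↦ by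
    rw [hcoord i, derivation_C_mul_add_C_mul]
  refine ⟨L.derivation 0 W, L.derivation (L.u ^ m i₀) h, (hsplit _).mpr ⟨?_, fun i hi ↦ ?_⟩,
    (hsplit _).mpr ⟨?_, fun i hi ↦ ?_⟩,
    L.isHomogeneous_derivation_X (isHomogeneous_zero _ _ _) hW,
    L.isHomogeneous_derivation_X (by simpa using L.isHomogeneous_u.pow (m i₀)) hh,
    fun θ hθ ↦ ?_⟩
  · simp [hu]
  · rw [hmap]
    simpa using (Finset.dvd_prod_of_mem _ hi).mul_left (C (q i))
  · simp [hu]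
  · rw [hmap, derivation_u, derivation_v, hcoord i]
    exact hdvd i hi
  obtain ⟨⟨g, hg⟩, hθT⟩ := (hsplit _).mp hθ
  rw [hu] at hg
  obtain ⟨f, hf⟩ : W ∣ θ L.v - g * h :=
    prod_pow_dvd_of_isHomogeneous_one (fun i _ ↦ hlin i) (fun i _ ↦ hα i)
      (fun i _ j _ hij ↦ hdist i j hij) m fun i hi ↦ by
        have hθi := hθT i hi
        rw [hcoord i] at hθi ⊢
        exact L.pow_dvd_map_v_sub (hq i hi) hg hθi (hdvd i hi)
  exact L.existsUnique_eq_smul_add_smul (f := f) (g := g) (pow_ne_zero _ (hu ▸ hα i₀))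
    (Finset.prod_ne_zero_iff.mpr fun i _ ↦ pow_ne_zero _ (hα i)) (by rw [hg, mul_comm])
    (by linear_combination hf)

end Multiarrangement

end LinearCoordinates

open MvPolynomial in
theorem unbalanced_rank_two_free_general {K : Type*} [Field K]
    (n : ℕ) (hn : 2 ≤ n)
    (α : Fin n → MvPolynomial (Fin 2) K)
    (hlin : ∀ i, (α i).IsHomogeneous 1) (hα : ∀ i, α i ≠ 0)
    (hdist : ∀ i j, i ≠ j → ∀ c : K, α i ≠ c • α j)
    (m : Fin n → ℕ)
    (mmax : ℕ) (hmax : mmax = Finset.univ.sup m)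
    (hunbal : ∑ i, m i ≤ 2 * mmax) :
    ∃ θ₁ θ₂ : Derivation K (MvPolynomial (Fin 2) K) (MvPolynomial (Fin 2) K),
      (∀ i, (α i) ^ (m i) ∣ θ₁ (α i)) ∧
      (∀ i, (α i) ^ (m i) ∣ θ₂ (α i)) ∧
      (∀ j : Fin 2, (θ₁ (X j)).IsHomogeneous ((∑ i, m i) - mmax)) ∧
      (∀ j : Fin 2, (θ₂ (X j)).IsHomogeneous mmax) ∧
      (∀ θ : Derivation K (MvPolynomial (Fin 2) K) (MvPolynomial (Fin 2) K),
        (∀ i, (α i) ^ (m i) ∣ θ (α i)) →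
        ∃! fg : MvPolynomial (Fin 2) K × MvPolynomial (Fin 2) K,
          θ = fg.1 • θ₁ + fg.2 • θ₂) := by
  obtain ⟨i₀, -, hi₀⟩ := Finset.exists_mem_eq_sup Finset.univ
    (Finset.univ_nonempty_iff.mpr ⟨⟨0, by omega⟩⟩) m
  subst hmax
  obtain ⟨L, hL⟩ := LinearCoordinates.exists_u_eq (hlin i₀) (hα i₀)
  have hsum : ∑ i ∈ Finset.univ.erase i₀, m i + m i₀ = ∑ i, m i :=
    Finset.sum_erase_add _ _ (Finset.mem_univ i₀)
  obtain ⟨θ₁, θ₂, h₁, h₂, hX₁, hX₂, hbasis⟩ :=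
    L.exists_homogeneous_basis hL.symm hlin hα hdist m (by omega)
  refine ⟨θ₁, θ₂, h₁, h₂, ?_, hi₀ ▸ hX₂, hbasis⟩
  rwa [hi₀, ← hsum, Nat.add_sub_cancel]

open MvPolynomial in
/-- Wakefield–Yuzvinsky: an unbalanced rank-two multiarrangement is free with
exponents `(|m| - m_max, m_max)`: there is a pair of derivations, homogeneous
of those degrees, tangent to the multiarrangement, which form an `S`-basis of
the module `D(𝒜,m)` of logarithmic derivations. -/
theorem unbalanced_rank_two_free {K : Type*} [Field K] [CharZero K]
    (n : ℕ) (hn : 2 ≤ n)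
    (α : Fin n → MvPolynomial (Fin 2) K)
    (hlin : ∀ i, (α i).IsHomogeneous 1) (hα : ∀ i, α i ≠ 0)
    (hdist : ∀ i j, i ≠ j → ∀ c : K, α i ≠ c • α j)
    (m : Fin n → ℕ) (hm : ∀ i, 1 ≤ m i)
    (mmax : ℕ) (hmax : mmax = Finset.univ.sup m)
    (hunbal : ∑ i, m i ≤ 2 * mmax) :
    ∃ θ₁ θ₂ : Derivation K (MvPolynomial (Fin 2) K) (MvPolynomial (Fin 2) K),
      (∀ i, (α i) ^ (m i) ∣ θ₁ (α i)) ∧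
      (∀ i, (α i) ^ (m i) ∣ θ₂ (α i)) ∧
      (∀ j : Fin 2, (θ₁ (X j)).IsHomogeneous ((∑ i, m i) - mmax)) ∧
      (∀ j : Fin 2, (θ₂ (X j)).IsHomogeneous mmax) ∧
      (∀ θ : Derivation K (MvPolynomial (Fin 2) K) (MvPolynomial (Fin 2) K),
        (∀ i, (α i) ^ (m i) ∣ θ (α i)) →
        ∃! fg : MvPolynomial (Fin 2) K × MvPolynomial (Fin 2) K,
          θ = fg.1 • θ₁ + fg.2 • θ₂) :=
  unbalanced_rank_two_free_general n hn α hlin hα hdist m mmax hmax hunbal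
end
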